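/- arXiv:2603.20093 — 2 statements merged into one kernel-verified Lean document; each statement's English description precedes it below -/
import Mathlib

section
/- Let ν and ν′ be Borel probability measures on ℝ with finite first moments, and suppose ν has a density f ∈ L^∞(ℝ) with respect to Lebesgue measure. Then |ν((0,∞)) − ν′((0,∞))| ≤ 2·(‖f‖_∞ · W₁(ν, ν′))^{1/2}, where W₁ denotes the 1-Wasserstein distance with respect to the Euclidean metric. -/
/-!
The ramp `x ↦ min (max (x - a) 0) ε` is 1-Lipschitz and squeezed between `ε • 1_(a+ε, ∞)` and
`ε • 1_(a, ∞)`, so testing `W1` against it gives `ε (ν (a+ε, ∞) - ν' (a, ∞)) ≤ W1 ν ν'`. The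
density bound `ν (a, a+ε] ≤ ‖f‖_∞ ε` moves the threshold `a + ε` back to `a`. With `a = 0` for one
sign and `a = -ε` (roles of `ν`, `ν'` swapped) for the other,
`|ν (0, ∞) - ν' (0, ∞)| ≤ ‖f‖_∞ ε + W1 ν ν' / ε` for every `ε > 0`; optimising in `ε` gives
`2 √(‖f‖_∞ W1 ν ν')`.
-/

open MeasureTheory

/-- The 1-Wasserstein distance on probability measures on `ℝ` (w.r.t. the Euclidean metric),
via Kantorovich–Rubinstein duality: the supremum over bounded 1-Lipschitz test functions. -/
noncomputable def W1 (μ ν : Measure ℝ) : ℝ :=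
  sSup {r : ℝ | ∃ u : ℝ → ℝ, (∃ C : ℝ, ∀ x, |u x| ≤ C) ∧ LipschitzWith 1 u ∧
    r = |(∫ x, u x ∂μ) - ∫ x, u x ∂ν|}

open Set Filter Topology
open scoped ENNReal

lemma le_two_sqrt_mul_of_forall_le {x M W : ℝ} (hM : 0 ≤ M) (hW : 0 ≤ W)
    (h : ∀ ε > 0, x ≤ M * ε + W / ε) : x ≤ 2 * √(M * W) := by
  -- Perturbing `M` and `W` to be positive makes the optimal `ε = √(M W) / M` available.
  have h_pos : ∀ η > 0, x ≤ 2 * √((M + η) * (W + η)) := by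
    intro η hη
    set s := √((M + η) * (W + η))
    have hs : 0 < s := by positivity
    have hs2 : s ^ 2 = (M + η) * (W + η) := Real.sq_sqrt (by positivity)
    calc x ≤ M * (s / (M + η)) + W / (s / (M + η)) := h _ (by positivity)
      _ ≤ (M + η) * (s / (M + η)) + (W + η) / (s / (M + η)) := by gcongr <;> linarith
      _ = 2 * s := by field_simp; nlinarith
  have h_lim : Tendsto (fun η => 2 * √((M + η) * (W + η))) (𝓝[>] 0) (𝓝 (2 * √(M * W))) := by
    have : Continuous (fun η => 2 * √((M + η) * (W + η))) := by fun_prop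
    simpa using (this.tendsto 0).mono_left nhdsWithin_le_nhds
  exact ge_of_tendsto h_lim (eventually_nhdsWithin_of_forall h_pos)

lemma measureReal_le_lpNorm_top_mul {α : Type*} [MeasurableSpace α] {μ ν : Measure α}
    {f : α → ℝ} (hf : MemLp f ∞ μ)
    (hdens : ∀ A : Set α, MeasurableSet A → (ν A).toReal = ∫ x in A, f x ∂μ)
    {A : Set α} (hA : MeasurableSet A) (hA_fin : μ A < ∞) :
    ν.real A ≤ lpNorm f ∞ μ * μ.real A := by
  rw [measureReal_def, hdens A hA]
  exact (le_abs_self _).trans <| norm_setIntegral_le_of_norm_le_const_ae hA_fin <|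
    ae_restrict_of_ae (ae_le_lpNorm_exponent_top hf)

lemma measureReal_Ioi_le_add_of_density {ν : Measure ℝ} [IsFiniteMeasure ν] {f : ℝ → ℝ}
    (hf : MemLp f ∞ volume)
    (hdens : ∀ A : Set ℝ, MeasurableSet A → (ν A).toReal = ∫ x in A, f x)
    (a : ℝ) {ε : ℝ} (hε : 0 ≤ ε) :
    ν.real (Ioi a) ≤ ν.real (Ioi (a + ε)) + lpNorm f ∞ volume * ε := by
  have h_strip := measureReal_le_lpNorm_top_mul hf hdens measurableSet_Ioc
    (measure_Ioc_lt_top (a := a) (b := a + ε))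
  rw [Real.volume_real_Ioc_of_le (by linarith), add_sub_cancel_left] at h_strip
  rw [← Ioc_union_Ioi_eq_Ioi (le_add_of_nonneg_right hε),
    measureReal_union (Ioc_disjoint_Ioi le_rfl) measurableSet_Ioi]
  linarith

noncomputable def ramp (ε a x : ℝ) : ℝ := min (max (x - a) 0) ε

section Ramp

variable {ε : ℝ} (a : ℝ)

lemma ramp_nonneg (hε : 0 ≤ ε) (x : ℝ) : 0 ≤ ramp ε a x := le_min (le_max_right _ _) hε

lemma ramp_le (x : ℝ) : ramp ε a x ≤ ε := min_le_right _ _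

lemma abs_ramp_le (hε : 0 ≤ ε) (x : ℝ) : |ramp ε a x| ≤ ε := by
  rw [abs_of_nonneg (ramp_nonneg a hε x)]
  exact ramp_le a x

lemma lipschitzWith_ramp : LipschitzWith 1 (ramp ε a) :=
  (((IsometryEquiv.subRight a).isometry.lipschitz).max_const 0).min_const ε

lemma ramp_le_indicator_Ioi (hε : 0 ≤ ε) : ramp ε a ≤ (Ioi a).indicator fun _ => ε := by
  intro x
  by_cases hx : a < x
  · simpa [hx] using ramp_le a x
  · simp [hx, ramp, hε, show x - a ≤ 0 by linarith [not_lt.mp hx]]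

lemma indicator_Ioi_add_le_ramp (hε : 0 ≤ ε) :
    (Ioi (a + ε)).indicator (fun _ => ε) ≤ ramp ε a := by
  intro x
  by_cases hx : a + ε < x
  · simp [hx, ramp, show ε ≤ x - a by linarith]
  · simpa [hx] using ramp_nonneg a hε x

variable (μ : Measure ℝ) [IsFiniteMeasure μ]

lemma integrable_ramp (hε : 0 ≤ ε) : Integrable (ramp ε a) μ :=
  .of_bound (lipschitzWith_ramp a).continuous.aestronglyMeasurable ε
    (ae_of_all _ (abs_ramp_le a hε))

lemma integral_ramp_le (hε : 0 ≤ ε) : ∫ x, ramp ε a x ∂μ ≤ ε * μ.real (Ioi a) := by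
  calc ∫ x, ramp ε a x ∂μ ≤ ∫ x, (Ioi a).indicator (fun _ => ε) x ∂μ :=
        integral_mono (integrable_ramp a μ hε) ((integrable_const ε).indicator measurableSet_Ioi)
          (ramp_le_indicator_Ioi a hε)
    _ = ε * μ.real (Ioi a) := by
        rw [integral_indicator_const _ measurableSet_Ioi, smul_eq_mul, mul_comm]

lemma le_integral_ramp (hε : 0 ≤ ε) : ε * μ.real (Ioi (a + ε)) ≤ ∫ x, ramp ε a x ∂μ := by
  calc ε * μ.real (Ioi (a + ε)) = ∫ x, (Ioi (a + ε)).indicator (fun _ => ε) x ∂μ := by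
        rw [integral_indicator_const _ measurableSet_Ioi, smul_eq_mul, mul_comm]
    _ ≤ ∫ x, ramp ε a x ∂μ :=
        integral_mono ((integrable_const ε).indicator measurableSet_Ioi)
          (integrable_ramp a μ hε) (indicator_Ioi_add_le_ramp a hε)

end Ramp

section Wasserstein

variable {μ ν : Measure ℝ} [IsProbabilityMeasure μ] [IsProbabilityMeasure ν]

lemma abs_integral_sub_apply_zero_le_integral_abs {u : ℝ → ℝ} (hu : LipschitzWith 1 u)
    (hu_int : Integrable u μ) (hμ : Integrable (fun x : ℝ => x) μ) :
    |(∫ x, u x ∂μ) - u 0| ≤ ∫ x, |x| ∂μ := by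
  calc |(∫ x, u x ∂μ) - u 0| = |∫ x, (u x - u 0) ∂μ| := by
        rw [integral_sub hu_int (integrable_const _), integral_const, probReal_univ, one_smul]
    _ ≤ ∫ x, |u x - u 0| ∂μ := abs_integral_le_integral_abs
    _ ≤ ∫ x, |x| ∂μ := integral_mono (hu_int.sub (integrable_const _)).abs hμ.abs fun x => by
        simpa [Real.dist_eq] using hu.dist_le_mul x 0

lemma bddAbove_W1_set (hμ : Integrable (fun x : ℝ => x) μ) (hν : Integrable (fun x : ℝ => x) ν) :
    BddAbove {r : ℝ | ∃ u : ℝ → ℝ, (∃ C : ℝ, ∀ x, |u x| ≤ C) ∧ LipschitzWith 1 u ∧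
      r = |(∫ x, u x ∂μ) - ∫ x, u x ∂ν|} := by
  refine ⟨(∫ x, |x| ∂μ) + ∫ x, |x| ∂ν, ?_⟩
  rintro r ⟨u, ⟨C, hC⟩, hu, rfl⟩
  have hu_int : ∀ (ρ : Measure ℝ) [IsFiniteMeasure ρ], Integrable u ρ := fun ρ _ =>
    .of_bound hu.continuous.aestronglyMeasurable C (ae_of_all _ hC)
  calc |(∫ x, u x ∂μ) - ∫ x, u x ∂ν| = |((∫ x, u x ∂μ) - u 0) - ((∫ x, u x ∂ν) - u 0)| := by
        rw [sub_sub_sub_cancel_right]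
    _ ≤ |(∫ x, u x ∂μ) - u 0| + |(∫ x, u x ∂ν) - u 0| := abs_sub _ _
    _ ≤ (∫ x, |x| ∂μ) + ∫ x, |x| ∂ν :=
        add_le_add (abs_integral_sub_apply_zero_le_integral_abs hu (hu_int μ) hμ)
          (abs_integral_sub_apply_zero_le_integral_abs hu (hu_int ν) hν)

lemma abs_integral_sub_integral_le_W1 (hμ : Integrable (fun x : ℝ => x) μ)
    (hν : Integrable (fun x : ℝ => x) ν) {u : ℝ → ℝ} (hb : ∃ C : ℝ, ∀ x, |u x| ≤ C)
    (hu : LipschitzWith 1 u) :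
    |(∫ x, u x ∂μ) - ∫ x, u x ∂ν| ≤ W1 μ ν :=
  le_csSup (bddAbove_W1_set hμ hν) ⟨u, hb, hu, rfl⟩

lemma W1_nonneg (hμ : Integrable (fun x : ℝ => x) μ) (hν : Integrable (fun x : ℝ => x) ν) :
    0 ≤ W1 μ ν := by
  simpa using abs_integral_sub_integral_le_W1 hμ hν (u := fun _ => 0) ⟨0, by simp⟩
    (LipschitzWith.const' 0)

lemma W1_comm (μ ν : Measure ℝ) : W1 μ ν = W1 ν μ := by
  simp only [W1, abs_sub_comm]

lemma measureReal_Ioi_add_sub_measureReal_Ioi_le (hμ : Integrable (fun x : ℝ => x) μ)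
    (hν : Integrable (fun x : ℝ => x) ν) (a : ℝ) {ε : ℝ} (hε : 0 < ε) :
    μ.real (Ioi (a + ε)) - ν.real (Ioi a) ≤ W1 μ ν / ε := by
  rw [le_div_iff₀ hε]
  have h_ramp := abs_integral_sub_integral_le_W1 hμ hν ⟨ε, abs_ramp_le a hε.le⟩
    (lipschitzWith_ramp a)
  linarith [le_integral_ramp a μ hε.le, integral_ramp_le a ν hε.le, le_abs_self
    ((∫ x, ramp ε a x ∂μ) - ∫ x, ramp ε a x ∂ν)]

end Wasserstein

theorem stmt0 (ν ν' : Measure ℝ) [IsProbabilityMeasure ν] [IsProbabilityMeasure ν']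
    (hmom : Integrable (fun x : ℝ => x) ν) (hmom' : Integrable (fun x : ℝ => x) ν')
    (f : ℝ → ℝ) (hf : MemLp f ⊤ (volume : Measure ℝ))
    (hdens : ∀ A : Set ℝ, MeasurableSet A → (ν A).toReal = ∫ x in A, f x) :
    |(ν (Set.Ioi (0:ℝ))).toReal - (ν' (Set.Ioi (0:ℝ))).toReal| ≤
      2 * Real.sqrt ((eLpNorm f ⊤ (volume : Measure ℝ)).toReal * W1 ν ν') := by
  simp only [← measureReal_def, toReal_eLpNorm hf.aestronglyMeasurable]
  refine le_two_sqrt_mul_of_forall_le lpNorm_nonneg (W1_nonneg hmom hmom') fun ε hε => ?_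
  rw [abs_sub_le_iff]
  constructor
  · have h_density := measureReal_Ioi_le_add_of_density hf hdens 0 hε.le
    have h_ramp := measureReal_Ioi_add_sub_measureReal_Ioi_le hmom hmom' 0 hε
    rw [zero_add] at h_density h_ramp
    linarith
  · have h_density := measureReal_Ioi_le_add_of_density hf hdens (-ε) hε.le
    have h_ramp := measureReal_Ioi_add_sub_measureReal_Ioi_le hmom' hmom (-ε) hε
    rw [neg_add_cancel] at h_density h_ramp
    rw [W1_comm] at h_ramp
    linarith
end

section
/- Let q ≥ 3 and let a, b be distinct invertible residue classes modulo q. Let M_q be the set of non-principal Dirichlet characters χ modulo q with |χ(a) − χ(b)| ≥ 1. Then |M_q| ≥ φ(q)/3. -/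
/-!
By orthogonality, `∑_χ |χ(a) - χ(b)|² = 2φ(q)`. Each term is at most `4`, and every character
outside `M_q` contributes at most `1` (the principal one contributes `0`), so
`2φ(q) ≤ 4|M_q| + (φ(q) - |M_q|)`, i.e. `3|M_q| ≥ φ(q)`.
-/

open Finset

theorem Finset.sum_le_card_filter_mul_add_card_filter_not_mul {ι : Type*} (s : Finset ι)
    (p : ι → Prop) [DecidablePred p] (f : ι → ℝ) {A B : ℝ}
    (hA : ∀ i ∈ s, p i → f i ≤ A) (hB : ∀ i ∈ s, ¬p i → f i ≤ B) :
    ∑ i ∈ s, f i ≤ #(s.filter p) * A + #(s.filter (¬p ·)) * B := by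
  rw [← sum_filter_add_sum_filter_not s p]
  gcongr
  · simpa [nsmul_eq_mul] using sum_le_card_nsmul _ f A fun i hi ↦
      hA i (mem_filter.1 hi).1 (mem_filter.1 hi).2
  · simpa [nsmul_eq_mul] using sum_le_card_nsmul _ f B fun i hi ↦
      hB i (mem_filter.1 hi).1 (mem_filter.1 hi).2

namespace DirichletCharacter

variable {n : ℕ}

lemma apply_unit_mul_apply_unit_inv (χ : DirichletCharacter ℂ n) (u : (ZMod n)ˣ) :
    χ u * χ ↑u⁻¹ = 1 := by
  rw [← map_mul, Units.mul_inv, map_one]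

lemma conj_apply_unit (χ : DirichletCharacter ℂ n) (u : (ZMod n)ˣ) :
    (starRingEnd ℂ) (χ u) = χ ↑u⁻¹ := by
  rw [← Complex.inv_eq_conj (χ.unit_norm_eq_one u),
    inv_eq_of_mul_eq_one_right (χ.apply_unit_mul_apply_unit_inv u)]

lemma norm_sub_sq_apply_units (χ : DirichletCharacter ℂ n) (a b : (ZMod n)ˣ) :
    (‖χ a - χ b‖ : ℂ) ^ 2 = 2 - χ ↑(a * b⁻¹) - χ ↑(b * a⁻¹) := by
  rw [← Complex.mul_conj', map_sub, conj_apply_unit, conj_apply_unit,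
    Units.val_mul, Units.val_mul, map_mul, map_mul]
  linear_combination χ.apply_unit_mul_apply_unit_inv a + χ.apply_unit_mul_apply_unit_inv b

lemma norm_sub_apply_units_le_two (χ : DirichletCharacter ℂ n) (a b : (ZMod n)ˣ) :
    ‖χ a - χ b‖ ≤ 2 := by
  grw [norm_sub_le, unit_norm_eq_one, unit_norm_eq_one]
  norm_num

variable [NeZero n]

theorem sum_norm_sub_sq_apply_units {a b : (ZMod n)ˣ} (hab : a ≠ b) :
    ∑ χ : DirichletCharacter ℂ n, ‖χ a - χ b‖ ^ 2 = 2 * n.totient := by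
  have hne_one {u v : (ZMod n)ˣ} (huv : u ≠ v) : (u * ↑v⁻¹ : ZMod n) ≠ 1 := by
    rwa [← Units.val_mul, ne_eq, Units.val_eq_one, mul_inv_eq_one]
  have hcard : (Fintype.card (DirichletCharacter ℂ n) : ℂ) = n.totient := by
    rw [← Nat.card_eq_fintype_card, card_eq_totient_of_hasEnoughRootsOfUnity]
  apply Complex.ofReal_injective
  push_cast [norm_sub_sq_apply_units]
  rw [sum_sub_distrib, sum_sub_distrib, sum_characters_eq_zero ℂ (hne_one hab),
    sum_characters_eq_zero ℂ (hne_one hab.symm), sum_const, card_univ, nsmul_eq_mul, hcard]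
  ring

end DirichletCharacter

open DirichletCharacter in
theorem stmt7_general (q : ℕ) [NeZero q] (a b : (ZMod q)ˣ) (hab : a ≠ b) :
    (q.totient : ℝ) / 3 ≤
      Nat.card {χ : DirichletCharacter ℂ q //
        χ ≠ 1 ∧ 1 ≤ ‖χ (a : ZMod q) - χ (b : ZMod q)‖} := by
  classical
  set P : DirichletCharacter ℂ q → Prop := fun χ ↦ χ ≠ 1 ∧ 1 ≤ ‖χ a - χ b‖
  have hsmall (χ : DirichletCharacter ℂ q) (hχ : ¬P χ) : ‖χ a - χ b‖ ^ 2 ≤ 1 := by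
    refine pow_le_one₀ (norm_nonneg _) ?_
    by_cases h1 : χ = 1
    · simp [h1]
    · exact le_of_lt (not_le.1 fun h ↦ hχ ⟨h1, h⟩)
  have hsum := sum_le_card_filter_mul_add_card_filter_not_mul univ P _
    (fun χ _ _ ↦ (pow_le_pow_left₀ (norm_nonneg _) (norm_sub_apply_units_le_two χ a b) 2).trans
      (by norm_num : (2 : ℝ) ^ 2 ≤ 4)) (fun χ _ ↦ hsmall χ)
  have hcard : (#(univ.filter P) : ℝ) + #(univ.filter (¬P ·)) = q.totient := by
    rw [← Nat.cast_add, card_filter_add_card_filter_not, card_univ, ← Nat.card_eq_fintype_card,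
      card_eq_totient_of_hasEnoughRootsOfUnity]
  rw [sum_norm_sub_sq_apply_units hab] at hsum
  rw [Nat.card_eq_fintype_card, Fintype.card_subtype]
  linarith

theorem stmt7 (q : ℕ) [NeZero q] (hq : 3 ≤ q) (a b : (ZMod q)ˣ) (hab : a ≠ b) :
    (q.totient : ℝ) / 3 ≤
      Nat.card {χ : DirichletCharacter ℂ q //
        χ ≠ 1 ∧ 1 ≤ ‖χ (a : ZMod q) - χ (b : ZMod q)‖} :=
  stmt7_general q a b hab
end
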